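/- Strong converse bound in the Stein setting: let N, M : A → B be quantum channels, n ∈ ℕ, and ε ∈ [0,1). For any n-round adaptive channel discrimination protocol whose type I error probability satisfies α_n ≤ ε, the type II error probability satisfies −(1/n) log₂ β_n ≤ D_max(N‖M) + (1/n) log₂(1/(1−ε)), where D_max(N‖M) is the max-relative entropy channel divergence. -/

import Mathlib

open scoped BigOperators ComplexOrder

noncomputable section

attribute [local instance] Classical.propDecidable

/-- A density matrix (quantum state): positive semidefinite with unit trace. -/
def IsDensity {ι : Type} [Fintype ι] (ρ : Matrix ι ι ℂ) : Prop :=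
  ρ.PosSemidef ∧ ρ.trace = 1

/-- The map `id_R ⊗ Φ` (for linear `Φ`), defined blockwise. -/
def idTensor {R ι κ : Type} (Φ : Matrix ι ι ℂ → Matrix κ κ ℂ)
    (X : Matrix (R × ι) (R × ι) ℂ) : Matrix (R × κ) (R × κ) ℂ :=
  fun p q => Φ (fun a b => X (p.1, a) (q.1, b)) p.2 q.2

/-- The map `Φ ⊗ id_E` (for linear `Φ`), defined blockwise. -/
def tensorId {ι κ E : Type} (Φ : Matrix ι ι ℂ → Matrix κ κ ℂ)
    (X : Matrix (ι × E) (ι × E) ℂ) : Matrix (κ × E) (κ × E) ℂ :=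
  fun p q => Φ (fun a b => X (a, p.2) (b, q.2)) p.1 q.1

/-- A quantum channel: linear, trace preserving, and completely positive. -/
structure IsChannel {ι κ : Type} [Fintype ι] [Fintype κ]
    (Φ : Matrix ι ι ℂ → Matrix κ κ ℂ) : Prop where
  linear : IsLinearMap ℂ Φ
  tracePres : ∀ X, (Φ X).trace = X.trace
  compPos : ∀ (k : ℕ) (X : Matrix (Fin k × ι) (Fin k × ι) ℂ),
      X.PosSemidef → (idTensor Φ X).PosSemidef

/-- A family of divergences, one for every finite dimension. -/
abbrev DivFam : Type 1 :=
  ∀ (ι : Type) [Fintype ι] [DecidableEq ι], Matrix ι ι ℂ → Matrix ι ι ℂ → EReal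

/-- Data processing: a generalized divergence does not increase under channels. -/
def DivDataProcessing (D : DivFam) : Prop :=
  ∀ (ι κ : Type) [Fintype ι] [DecidableEq ι] [Fintype κ] [DecidableEq κ]
    (Φ : Matrix ι ι ℂ → Matrix κ κ ℂ), IsChannel Φ →
    ∀ ρ σ : Matrix ι ι ℂ, IsDensity ρ → IsDensity σ →
      D κ (Φ ρ) (Φ σ) ≤ D ι ρ σ

/-- Faithfulness: `D(ρ‖ρ) ≤ 0` for every state `ρ`. -/
def DivFaithful (D : DivFam) : Prop :=
  ∀ (ι : Type) [Fintype ι] [DecidableEq ι] (ρ : Matrix ι ι ℂ),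
    IsDensity ρ → D ι ρ ρ ≤ 0

/-- Strong faithfulness: `D(ρ‖σ) = 0` iff `ρ = σ`. -/
def DivStronglyFaithful (D : DivFam) : Prop :=
  ∀ (ι : Type) [Fintype ι] [DecidableEq ι] (ρ σ : Matrix ι ι ℂ),
    IsDensity ρ → IsDensity σ → (D ι ρ σ = 0 ↔ ρ = σ)

/-- The generalized channel divergence `D(N‖M)`. -/
def channelDiv (D : DivFam) {ι κ : Type} [Fintype ι] [DecidableEq ι] [Fintype κ] [DecidableEq κ]
    (N M : Matrix ι ι ℂ → Matrix κ κ ℂ) : EReal :=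
  ⨆ (R : ℕ) (ρ : Matrix (Fin R × ι) (Fin R × ι) ℂ) (_ : IsDensity ρ),
    D (Fin R × κ) (idTensor N ρ) (idTensor M ρ)

/-- The amortized channel divergence `D^𝒜(N‖M)`. -/
def amortizedDiv (D : DivFam) {ι κ : Type} [Fintype ι] [DecidableEq ι] [Fintype κ] [DecidableEq κ]
    (N M : Matrix ι ι ℂ → Matrix κ κ ℂ) : EReal :=
  ⨆ (R : ℕ) (ρ : Matrix (Fin R × ι) (Fin R × ι) ℂ) (σ : Matrix (Fin R × ι) (Fin R × ι) ℂ)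
    (_ : IsDensity ρ) (_ : IsDensity σ),
      D (Fin R × κ) (idTensor N ρ) (idTensor M σ) - D (Fin R × ι) ρ σ

/-- Apply a real function to a Hermitian matrix via the spectral decomposition. -/
def hermFun {ι : Type} [Fintype ι] [DecidableEq ι] (f : ℝ → ℝ) (A : Matrix ι ι ℂ) :
    Matrix ι ι ℂ :=
  if hA : A.IsHermitian then
    (hA.eigenvectorUnitary : Matrix ι ι ℂ) *
      Matrix.diagonal (fun i => (f (hA.eigenvalues i) : ℂ)) *
      star (hA.eigenvectorUnitary : Matrix ι ι ℂ)
  else 0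

/-- Real matrix power via spectral calculus, with the generalized-inverse convention `0 ↦ 0`. -/
def matPow {ι : Type} [Fintype ι] [DecidableEq ι] (A : Matrix ι ι ℂ) (r : ℝ) : Matrix ι ι ℂ :=
  hermFun (fun x => if x = 0 then 0 else Real.rpow x r) A

/-- Matrix base-2 logarithm via spectral calculus, taken on the support. -/
def matLog2 {ι : Type} [Fintype ι] [DecidableEq ι] (A : Matrix ι ι ℂ) : Matrix ι ι ℂ :=
  hermFun (fun x => if x = 0 then 0 else Real.logb 2 x) A

/-- The projection onto the support of a Hermitian matrix. -/
def suppProj {ι : Type} [Fintype ι] [DecidableEq ι] (A : Matrix ι ι ℂ) : Matrix ι ι ℂ :=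
  hermFun (fun x => if x = 0 then 0 else 1) A

/-- `supp ρ ⊆ supp σ`, expressed (for Hermitian matrices) as kernel containment
`ker σ ⊆ ker ρ`. -/
def suppLE {ι : Type} [Fintype ι] (ρ σ : Matrix ι ι ℂ) : Prop :=
  ∀ v : ι → ℂ, σ.mulVec v = 0 → ρ.mulVec v = 0

/-- The quantum relative entropy `D(ρ‖σ) = Tr[ρ(log₂ρ − log₂σ)]`,
`+∞` if the support condition fails. -/
def relEnt {ι : Type} [Fintype ι] [DecidableEq ι] (ρ σ : Matrix ι ι ℂ) : EReal :=
  if suppLE ρ σ then (((ρ * (matLog2 ρ - matLog2 σ)).trace).re : EReal) else ⊤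

/-- `−log₂ x` as an extended real, with `−log₂ 0 = +∞`. -/
def negLog2 (x : ℝ) : EReal :=
  if x ≤ 0 then ⊤ else ((-Real.logb 2 x : ℝ) : EReal)

/-- The max-relative entropy `D_max(ρ‖σ) = inf{λ : ρ ≤ 2^λ σ}` (Loewner order). -/
def Dmax {ι : Type} [Fintype ι] (ρ σ : Matrix ι ι ℂ) : EReal :=
  ⨅ (l : ℝ) (_ : (((2 : ℝ) ^ l) • σ - ρ).PosSemidef), (l : EReal)

/-- The sandwiched Rényi divergence `D̃_α`. -/
def sandRenyi {ι : Type} [Fintype ι] [DecidableEq ι] (α : ℝ) (ρ σ : Matrix ι ι ℂ) : EReal :=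
  if α = 1 then relEnt ρ σ
  else if 1 < α ∧ ¬ suppLE ρ σ then ⊤
  else if α < 1 ∧ (ρ * σ).trace = 0 then ⊤
  else ((((α - 1)⁻¹ *
      Real.logb 2
        (((matPow (matPow σ ((1 - α) / (2 * α)) * ρ * matPow σ ((1 - α) / (2 * α))) α).trace).re)) :
        ℝ) : EReal)

/-- The Petz–Rényi divergence `D_α`. -/
def petzRenyi {ι : Type} [Fintype ι] [DecidableEq ι] (α : ℝ) (ρ σ : Matrix ι ι ℂ) : EReal :=
  if α = 0 then negLog2 (((suppProj ρ * σ).trace).re)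
  else if α = 1 then relEnt ρ σ
  else if 1 < α ∧ ¬ suppLE ρ σ then ⊤
  else if α < 1 ∧ (ρ * σ).trace = 0 then ⊤
  else ((((α - 1)⁻¹ * Real.logb 2 (((matPow ρ α * matPow σ (1 - α)).trace).re)) : ℝ) : EReal)

/-- The trace norm `‖X‖₁ = Tr √(XᴴX)`. -/
def traceNorm {ι : Type} [Fintype ι] [DecidableEq ι] (X : Matrix ι ι ℂ) : ℝ :=
  ((matPow (X.conjTranspose * X) (1/2 : ℝ)).trace).re

/-- The fidelity `F(ρ,σ) = ‖√ρ√σ‖₁²`. -/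
def matFidelity {ι : Type} [Fintype ι] [DecidableEq ι] (ρ σ : Matrix ι ι ℂ) : ℝ :=
  (traceNorm (matPow ρ (1/2 : ℝ) * matPow σ (1/2 : ℝ))) ^ 2

def relEntFam : DivFam := fun _ _ _ ρ σ => relEnt ρ σ
def DmaxFam : DivFam := fun _ _ _ ρ σ => Dmax ρ σ
def sandFam (α : ℝ) : DivFam := fun _ _ _ ρ σ => sandRenyi α ρ σ
def petzFam (α : ℝ) : DivFam := fun _ _ _ ρ σ => petzRenyi α ρ σ
/-- `D̃_{1/2}(ρ‖σ) = −log₂ F(ρ,σ)` as a divergence family. -/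
def fidDivFam : DivFam := fun _ _ _ ρ σ => negLog2 (matFidelity ρ σ)

/-- The classical-quantum state `Σ_x p(x) |x⟩⟨x| ⊗ ρ^x`. -/
def cqState {X ι : Type} [DecidableEq X] (p : X → ℝ) (ρ : X → Matrix ι ι ℂ) :
    Matrix (X × ι) (X × ι) ℂ :=
  fun a b => if a.1 = b.1 then (p a.1 : ℂ) * ρ a.1 a.2 b.2 else 0

/-- The direct-sum property of a generalized divergence on classical-quantum states. -/
def DivDirectSum (D : DivFam) : Prop :=
  ∀ (X ι : Type) [Fintype X] [DecidableEq X] [Fintype ι] [DecidableEq ι]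
    (p : X → ℝ), (∀ x, 0 ≤ p x) → (∑ x, p x = 1) →
    ∀ (ρ σ : X → Matrix ι ι ℂ), (∀ x, IsDensity (ρ x)) → (∀ x, IsDensity (σ x)) →
      D (X × ι) (cqState p ρ) (cqState p σ) = ∑ x, (p x : EReal) * D ι (ρ x) (σ x)

/-- The Kronecker (tensor) product of square matrices. -/
def mkron {ι E : Type} (A : Matrix ι ι ℂ) (B : Matrix E E ℂ) : Matrix (ι × E) (ι × E) ℂ :=
  fun p q => A p.1 q.1 * B p.2 q.2

/-- Sub-additivity of a divergence with respect to tensor-product states. -/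
def DivSubAdditive (D : DivFam) : Prop :=
  ∀ (ι E : Type) [Fintype ι] [DecidableEq ι] [Fintype E] [DecidableEq E]
    (ρ σ : Matrix ι ι ℂ) (ω τ : Matrix E E ℂ),
    IsDensity ρ → IsDensity σ → IsDensity ω → IsDensity τ →
      D (ι × E) (mkron ρ ω) (mkron σ τ) ≤ D ι ρ σ + D E ω τ

/-- The classical-quantum channel `ρ ↦ Σ_x ⟨x|ρ|x⟩ ν^x`. -/
def cqChannel {X κ : Type} [Fintype X] [Fintype κ] (ν : X → Matrix κ κ ℂ) :
    Matrix X X ℂ → Matrix κ κ ℂ :=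
  fun ρ => ∑ x, ρ x x • ν x

/-- The maximally entangled state of Schmidt rank `|ι|` on `ι × ι`. -/
def maxEnt (ι : Type) [Fintype ι] [DecidableEq ι] : Matrix (ι × ι) (ι × ι) ℂ :=
  fun p q => if p.1 = p.2 ∧ q.1 = q.2 then ((Fintype.card ι : ℂ))⁻¹ else 0

/-- An `(m+1)`-round adaptive channel discrimination protocol: registers `R_0, …, R_m`,
a shared initial state, adaptive channels between channel uses, and a final measurement. -/
structure Protocol (ι κ : Type) [Fintype ι] [DecidableEq ι] [Fintype κ] [DecidableEq κ]
    (m : ℕ) where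
  r : ℕ → ℕ
  init : Matrix (Fin (r 0) × ι) (Fin (r 0) × ι) ℂ
  init_density : IsDensity init
  adapt : ∀ i : ℕ, Matrix (Fin (r i) × κ) (Fin (r i) × κ) ℂ →
      Matrix (Fin (r (i + 1)) × ι) (Fin (r (i + 1)) × ι) ℂ
  adapt_channel : ∀ i, i < m → IsChannel (adapt i)
  meas : Matrix (Fin (r m) × κ) (Fin (r m) × κ) ℂ
  meas_psd : meas.PosSemidef
  meas_le_one : ((1 : Matrix (Fin (r m) × κ) (Fin (r m) × κ) ℂ) - meas).PosSemidef

namespace Protocol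

variable {ι κ : Type} [Fintype ι] [DecidableEq ι] [Fintype κ] [DecidableEq κ] {m : ℕ}

/-- The state on `R_i ⊗ A` just before the `(i+1)`-st channel use, when the channel is `Ch`. -/
def evolve (P : Protocol ι κ m) (Ch : Matrix ι ι ℂ → Matrix κ κ ℂ) :
    (i : ℕ) → Matrix (Fin (P.r i) × ι) (Fin (P.r i) × ι) ℂ
  | 0 => P.init
  | (i + 1) => P.adapt i (idTensor Ch (P.evolve Ch i))

/-- The final state on `R_m ⊗ B` after all `m + 1` channel uses. -/
def final (P : Protocol ι κ m) (Ch : Matrix ι ι ℂ → Matrix κ κ ℂ) :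
    Matrix (Fin (P.r m) × κ) (Fin (P.r m) × κ) ℂ :=
  idTensor Ch (P.evolve Ch m)

/-- The probability of accepting (deciding for the null hypothesis). -/
def acceptProb (P : Protocol ι κ m) (Ch : Matrix ι ι ℂ → Matrix κ κ ℂ) : ℝ :=
  ((P.meas * P.final Ch).trace).re

/-- The type I error probability `Tr[(I − Q) ρ'⁽ⁿ⁾]`. -/
def typeI (P : Protocol ι κ m) (N : Matrix ι ι ℂ → Matrix κ κ ℂ) : ℝ :=
  ((((1 : Matrix (Fin (P.r m) × κ) (Fin (P.r m) × κ) ℂ) - P.meas) * P.final N).trace).re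

/-- The type II error probability `Tr[Q τ'⁽ⁿ⁾]`. -/
def typeII (P : Protocol ι κ m) (M : Matrix ι ι ℂ → Matrix κ κ ℂ) : ℝ :=
  ((P.meas * P.final M).trace).re

end Protocol

/-- The binary (classical) state `diag(p, 1−p)`. -/
def binState (p : ℝ) : Matrix (Fin 2) (Fin 2) ℂ :=
  Matrix.diagonal (fun i => if i = 0 then (p : ℂ) else ((1 - p : ℝ) : ℂ))

/-- The binary entropy `h₂(ε)`. -/
def h2 (ε : ℝ) : ℝ := -(ε * Real.logb 2 ε) - (1 - ε) * Real.logb 2 (1 - ε)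

/-- `ζ_n(ε, N, M)` with `n = m + 1`: the optimal type II error exponent among all
`(m+1)`-round adaptive protocols with type I error at most `ε`. -/
def steinExp {ι κ : Type} [Fintype ι] [DecidableEq ι] [Fintype κ] [DecidableEq κ]
    (N M : Matrix ι ι ℂ → Matrix κ κ ℂ) (m : ℕ) (ε : ℝ) : EReal :=
  ⨆ (P : Protocol ι κ m) (_ : P.typeI N ≤ ε),
    (((m + 1 : ℝ))⁻¹ : EReal) * negLog2 (P.typeII M)

/-- Partial trace over the (left) reference system. -/
def ptraceLeft {R ι : Type} [Fintype R] (ψ : Matrix (R × ι) (R × ι) ℂ) : Matrix ι ι ℂ :=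
  fun a b => ∑ r, ψ (r, a) (r, b)

/-- The energy-constrained generalized channel divergence. -/
def eChannelDiv (D : DivFam) {ι κ : Type} [Fintype ι] [DecidableEq ι] [Fintype κ] [DecidableEq κ]
    (H : Matrix ι ι ℂ) (E : ℝ) (N M : Matrix ι ι ℂ → Matrix κ κ ℂ) : EReal :=
  ⨆ (R : ℕ) (ψ : Matrix (Fin R × ι) (Fin R × ι) ℂ) (_ : IsDensity ψ)
    (_ : ((H * ptraceLeft ψ).trace).re ≤ E),
      D (Fin R × κ) (idTensor N ψ) (idTensor M ψ)

/-- The energy-constrained amortized channel divergence. -/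
def eAmortizedDiv (D : DivFam) {ι κ : Type} [Fintype ι] [DecidableEq ι] [Fintype κ] [DecidableEq κ]
    (H : Matrix ι ι ℂ) (E : ℝ) (N M : Matrix ι ι ℂ → Matrix κ κ ℂ) : EReal :=
  ⨆ (R : ℕ) (ρ : Matrix (Fin R × ι) (Fin R × ι) ℂ) (σ : Matrix (Fin R × ι) (Fin R × ι) ℂ)
    (_ : IsDensity ρ) (_ : IsDensity σ)
    (_ : ((H * ptraceLeft ρ).trace).re ≤ E) (_ : ((H * ptraceLeft σ).trace).re ≤ E),
      D (Fin R × κ) (idTensor N ρ) (idTensor M σ) - D (Fin R × ι) ρ σ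

/-- `sup_α(ρ/σ)`: supremum of `Tr[Λρ]/Tr[Λσ]` over Hermitian `Λ` with `α⁻¹ I ≤ Λ ≤ I`. -/
def hilbertSup {ι : Type} [Fintype ι] [DecidableEq ι] (α : ℝ) (ρ σ : Matrix ι ι ℂ) : ℝ :=
  sSup { t : ℝ | ∃ Λ : Matrix ι ι ℂ, Λ.IsHermitian ∧
    (Λ - (α⁻¹ : ℝ) • (1 : Matrix ι ι ℂ)).PosSemidef ∧
    ((1 : Matrix ι ι ℂ) - Λ).PosSemidef ∧
    t = ((Λ * ρ).trace).re / ((Λ * σ).trace).re }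

/-- The Hilbert `α`-divergence `H_α(ρ‖σ)`, with `H₁(ρ‖σ) = ‖ρ−σ‖₁ / (2 ln 2)`. -/
def hilbertDiv {ι : Type} [Fintype ι] [DecidableEq ι] (α : ℝ) (ρ σ : Matrix ι ι ℂ) : ℝ :=
  if α = 1 then (2 * Real.log 2)⁻¹ * traceNorm (ρ - σ)
  else (α / (α - 1)) * Real.logb 2 (hilbertSup α ρ σ)

/-! If `D_max(N‖M) < λ`, then `(id ⊗ N)(ρ) ≤ 2^λ (id ⊗ M)(ρ)` for every input state. Since the
adaptive maps and the channels are positive, this propagates through the protocol to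
`ρ'⁽ⁿ⁾ ≤ 2^{nλ} τ'⁽ⁿ⁾`. Testing with `Q` gives `1 − ε ≤ 1 − α_n ≤ 2^{nλ} β_n`; take `log₂` and let
`λ ↓ D_max(N‖M)`. -/

open scoped MatrixOrder

lemma IsLinearMap.map_real_smul {M M₂ : Type*} [AddCommGroup M] [AddCommGroup M₂] [Module ℂ M]
    [Module ℂ M₂] [Module ℝ M] [Module ℝ M₂] [IsScalarTower ℝ ℂ M] [IsScalarTower ℝ ℂ M₂]
    {f : M → M₂} (hf : IsLinearMap ℂ f) (c : ℝ) (x : M) : f (c • x) = c • f x :=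
  (hf.mk' f).map_smul_of_tower c x

lemma isLinearMap_idTensor {R ι κ : Type} {Φ : Matrix ι ι ℂ → Matrix κ κ ℂ}
    (hΦ : IsLinearMap ℂ Φ) : IsLinearMap ℂ (idTensor (R := R) Φ) where
  map_add X Y := by
    ext p q
    exact congrFun (congrFun (hΦ.map_add _ _) p.2) q.2
  map_smul c X := by
    ext p q
    exact congrFun (congrFun (hΦ.map_smul c _) p.2) q.2

lemma trace_idTensor {R ι κ : Type} [Fintype R] [Fintype ι] [Fintype κ]
    {Φ : Matrix ι ι ℂ → Matrix κ κ ℂ} (hΦ : ∀ X, (Φ X).trace = X.trace)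
    (X : Matrix (R × ι) (R × ι) ℂ) : (idTensor Φ X).trace = X.trace := by
  simp only [Matrix.trace, Matrix.diag, Fintype.sum_prod_type]
  exact Finset.sum_congr rfl fun r _ => hΦ fun a b => X (r, a) (r, b)

lemma Matrix.re_trace_mul_le_of_le {n : Type} [Fintype n] {Q A B : Matrix n n ℂ}
    (hQ : 0 ≤ Q) (hAB : A ≤ B) : (Q * A).trace.re ≤ (Q * B).trace.re := by
  obtain ⟨b, rfl⟩ := CStarAlgebra.nonneg_iff_eq_star_mul_self.mp hQ
  have hnonneg : 0 ≤ (b * (B - A) * star b).trace :=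
    (Matrix.PosSemidef.mul_mul_conjTranspose_same hAB b).trace_nonneg
  rw [Matrix.trace_mul_cycle, Matrix.mul_sub, Matrix.trace_sub, sub_nonneg] at hnonneg
  exact (Complex.le_def.mp hnonneg).1

namespace IsChannel

variable {ι κ : Type} [Fintype ι] [Fintype κ] {Φ : Matrix ι ι ℂ → Matrix κ κ ℂ}

lemma map_nonneg (hΦ : IsChannel Φ) {X : Matrix ι ι ℂ} (hX : 0 ≤ X) : 0 ≤ Φ X := by
  have h := hΦ.compPos 1 (X.submatrix Prod.snd Prod.snd)
    ((Matrix.nonneg_iff_posSemidef.mp hX).submatrix _)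
  exact (h.submatrix fun a => ((0 : Fin 1), a)).nonneg

lemma monotone (hΦ : IsChannel Φ) : Monotone Φ := fun X Y hXY => by
  rw [← sub_nonneg, ← hΦ.linear.map_sub]
  exact hΦ.map_nonneg (sub_nonneg.mpr hXY)

lemma monotone_idTensor (hΦ : IsChannel Φ) (R : ℕ) :
    Monotone (idTensor (R := Fin R) Φ) := fun X Y hXY => by
  rw [← sub_nonneg, ← (isLinearMap_idTensor hΦ.linear).map_sub]
  exact (hΦ.compPos R _ (Matrix.nonneg_iff_posSemidef.mp (sub_nonneg.mpr hXY))).nonneg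

lemma isDensity_map (hΦ : IsChannel Φ) {ρ : Matrix ι ι ℂ} (hρ : IsDensity ρ) :
    IsDensity (Φ ρ) :=
  ⟨Matrix.nonneg_iff_posSemidef.mp (hΦ.map_nonneg hρ.1.nonneg), (hΦ.tracePres ρ).trans hρ.2⟩

lemma isDensity_idTensor (hΦ : IsChannel Φ) {R : ℕ} {ρ : Matrix (Fin R × ι) (Fin R × ι) ℂ}
    (hρ : IsDensity ρ) : IsDensity (idTensor Φ ρ) :=
  ⟨hΦ.compPos R ρ hρ.1, (trace_idTensor hΦ.tracePres ρ).trans hρ.2⟩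

end IsChannel

lemma le_rpow_smul_of_Dmax_lt {ι : Type} [Fintype ι] {ρ σ : Matrix ι ι ℂ} (hσ : 0 ≤ σ) {l : ℝ}
    (h : Dmax ρ σ < l) : ρ ≤ (2 : ℝ) ^ l • σ := by
  obtain ⟨l', hl'⟩ := iInf_lt_iff.mp h
  obtain ⟨hρσ, hl'l⟩ := iInf_lt_iff.mp hl'
  have h2 : (2 : ℝ) ^ l' ≤ 2 ^ l :=
    Real.rpow_le_rpow_of_exponent_le (by norm_num) (EReal.coe_le_coe_iff.mp hl'l.le)
  exact le_trans (b := (2 : ℝ) ^ l' • σ) hρσ (smul_le_smul_of_nonneg_right h2 hσ)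

section ChannelDivergence

variable {ι κ : Type} [Fintype ι] [Fintype κ] {N M : Matrix ι ι ℂ → Matrix κ κ ℂ}

lemma idTensor_le_rpow_smul_of_channelDiv_lt [DecidableEq ι] [DecidableEq κ]
    (hM : IsChannel M) {l : ℝ} (h : channelDiv DmaxFam N M < l) {R : ℕ}
    {ρ : Matrix (Fin R × ι) (Fin R × ι) ℂ} (hρ : IsDensity ρ) : idTensor N ρ ≤ (2 : ℝ) ^ l • idTensor M ρ := by
  refine le_rpow_smul_of_Dmax_lt (Matrix.PosSemidef.nonneg (hM.compPos R ρ hρ.1)) ?_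
  have hle : Dmax (idTensor N ρ) (idTensor M ρ) ≤ channelDiv DmaxFam N M :=
    le_iSup₂_of_le R ρ (le_iSup (fun _ : IsDensity ρ => DmaxFam _ (idTensor N ρ) (idTensor M ρ)) hρ)
  exact hle.trans_lt h

lemma idTensor_le_mul_smul (hN : IsChannel N) {c : ℝ}
    (hNM : ∀ (R : ℕ) (ρ : Matrix (Fin R × ι) (Fin R × ι) ℂ),
      IsDensity ρ → idTensor N ρ ≤ c • idTensor M ρ)
    {R : ℕ} {X Y : Matrix (Fin R × ι) (Fin R × ι) ℂ} {a : ℝ} (ha : 0 ≤ a) (hY : IsDensity Y)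
    (hXY : X ≤ a • Y) : idTensor N X ≤ (a * c) • idTensor M Y :=
  calc idTensor N X ≤ idTensor N (a • Y) := hN.monotone_idTensor R hXY
    _ = a • idTensor N Y := (isLinearMap_idTensor hN.linear).map_real_smul a Y
    _ ≤ a • (c • idTensor M Y) := smul_le_smul_of_nonneg_left (hNM R Y hY) ha
    _ = (a * c) • idTensor M Y := smul_smul a c _

end ChannelDivergence

namespace Protocol

variable {ι κ : Type} [Fintype ι] [DecidableEq ι] [Fintype κ] [DecidableEq κ] {m : ℕ}
  (P : Protocol ι κ m) {N M : Matrix ι ι ℂ → Matrix κ κ ℂ}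

lemma isDensity_evolve (hN : IsChannel N) {i : ℕ} (hi : i ≤ m) : IsDensity (P.evolve N i) := by
  induction i with
  | zero => exact P.init_density
  | succ i ih =>
    exact (P.adapt_channel i hi).isDensity_map (hN.isDensity_idTensor (ih (by omega)))

lemma isDensity_final (hN : IsChannel N) : IsDensity (P.final N) :=
  hN.isDensity_idTensor (P.isDensity_evolve hN le_rfl)

lemma evolve_le_pow_smul (hN : IsChannel N) (hM : IsChannel M) {c : ℝ} (hc : 0 ≤ c)
    (hNM : ∀ (R : ℕ) (ρ : Matrix (Fin R × ι) (Fin R × ι) ℂ),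
      IsDensity ρ → idTensor N ρ ≤ c • idTensor M ρ)
    {i : ℕ} (hi : i ≤ m) : P.evolve N i ≤ c ^ i • P.evolve M i := by
  induction i with
  | zero => simp [evolve]
  | succ i ih =>
    have hadapt := P.adapt_channel i hi
    calc P.evolve N (i + 1) = P.adapt i (idTensor N (P.evolve N i)) := rfl
      _ ≤ P.adapt i ((c ^ i * c) • idTensor M (P.evolve M i)) :=
        hadapt.monotone <| idTensor_le_mul_smul hN hNM (pow_nonneg hc i)
          (P.isDensity_evolve hM (by omega)) (ih (by omega))
      _ = c ^ (i + 1) • P.evolve M (i + 1) := by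
        rw [hadapt.linear.map_real_smul, pow_succ]
        rfl

lemma final_le_pow_smul (hN : IsChannel N) (hM : IsChannel M) {c : ℝ} (hc : 0 ≤ c)
    (hNM : ∀ (R : ℕ) (ρ : Matrix (Fin R × ι) (Fin R × ι) ℂ),
      IsDensity ρ → idTensor N ρ ≤ c • idTensor M ρ) :
    P.final N ≤ c ^ (m + 1) • P.final M := by
  rw [pow_succ]
  exact idTensor_le_mul_smul hN hNM (pow_nonneg hc m) (P.isDensity_evolve hM le_rfl)
    (P.evolve_le_pow_smul hN hM hc hNM le_rfl)

lemma acceptProb_le_mul_of_final_le {c : ℝ} (h : P.final N ≤ c • P.final M) :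
    P.acceptProb N ≤ c * P.acceptProb M := by
  have := Matrix.re_trace_mul_le_of_le P.meas_psd.nonneg h
  rwa [Matrix.mul_smul, Matrix.trace_smul, Complex.real_smul, Complex.re_ofReal_mul] at this

lemma typeI_eq_one_sub_acceptProb (hN : IsChannel N) : P.typeI N = 1 - P.acceptProb N := by
  rw [typeI, Matrix.sub_mul, Matrix.one_mul, Matrix.trace_sub, (P.isDensity_final hN).2,
    Complex.sub_re, Complex.one_re, acceptProb]

end Protocol

lemma EReal.le_add_coe_of_forall_lt {x y : EReal} {c : ℝ}
    (h : ∀ l : ℝ, x < l → y ≤ ((l + c : ℝ) : EReal)) : y ≤ x + c := by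
  refine EReal.le_of_forall_lt_iff_le.mp fun z hz => ?_
  have hx : x < ((z - c : ℝ) : EReal) := by
    rw [EReal.coe_sub]
    exact (EReal.lt_sub_iff_add_lt (.inl (EReal.coe_ne_bot c)) (.inl (EReal.coe_ne_top c))).mpr hz
  simpa using h (z - c) hx

lemma inv_mul_negLog2_le {k : ℕ} (hk : 0 < k) {a β l : ℝ} (ha : 0 < a)
    (h : a ≤ ((2 : ℝ) ^ l) ^ k * β) :
    ((k : ℝ)⁻¹ : EReal) * negLog2 β ≤ ((l + (k : ℝ)⁻¹ * Real.logb 2 a⁻¹ : ℝ) : EReal) := by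
  have hβ : 0 < β := pos_of_mul_pos_right (ha.trans_le h) (by positivity)
  have hlog : Real.logb 2 a ≤ k * l + Real.logb 2 β :=
    calc Real.logb 2 a ≤ Real.logb 2 (((2 : ℝ) ^ l) ^ k * β) :=
          Real.logb_le_logb_of_le (by norm_num) ha h
      _ = k * l + Real.logb 2 β := by
          rw [Real.logb_mul (by positivity) hβ.ne', Real.logb_pow,
            Real.logb_rpow (by norm_num) (by norm_num)]
  have hk' : (0 : ℝ) < k := Nat.cast_pos.mpr hk
  rw [negLog2, if_neg hβ.not_ge, ← EReal.coe_inv, ← EReal.coe_mul, EReal.coe_le_coe_iff,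
    Real.logb_inv]
  calc (k : ℝ)⁻¹ * -Real.logb 2 β ≤ (k : ℝ)⁻¹ * (k * l - Real.logb 2 a) :=
        mul_le_mul_of_nonneg_left (by linarith) (inv_nonneg.mpr hk'.le)
    _ = l + (k : ℝ)⁻¹ * -Real.logb 2 a := by field_simp; ring

theorem stein_strong_converse_Dmax_general
    {ι κ : Type} [Fintype ι] [DecidableEq ι] [Fintype κ] [DecidableEq κ]
    (N M : Matrix ι ι ℂ → Matrix κ κ ℂ) (hN : IsChannel N) (hM : IsChannel M)
    (m : ℕ) (ε : ℝ) (hε1 : ε < 1)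
    (P : Protocol ι κ m) (hα : P.typeI N ≤ ε) :
    (((m + 1 : ℝ))⁻¹ : EReal) * negLog2 (P.typeII M) ≤
      channelDiv DmaxFam N M +
        (((((m + 1 : ℝ))⁻¹ * Real.logb 2 ((1 - ε)⁻¹)) : ℝ) : EReal) := by
  refine EReal.le_add_coe_of_forall_lt fun l hl => ?_
  have hfinal := P.final_le_pow_smul hN hM (by positivity : (0 : ℝ) ≤ 2 ^ l)
    fun _ _ hρ => idTensor_le_rpow_smul_of_channelDiv_lt hM hl hρ
  have hβ : 1 - ε ≤ ((2 : ℝ) ^ l) ^ (m + 1) * P.typeII M := by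
    rw [P.typeI_eq_one_sub_acceptProb hN] at hα
    exact (by linarith : 1 - ε ≤ P.acceptProb N).trans (P.acceptProb_le_mul_of_final_le hfinal)
  simpa using inv_mul_negLog2_le m.succ_pos (by linarith) hβ

/-- Strong converse bound in the Stein setting: for an `n = m + 1`-round
adaptive protocol with type I error at most `ε`,
`−(1/n) log₂ β_n ≤ D_max(N‖M) + (1/n) log₂(1/(1−ε))`. -/
theorem stein_strong_converse_Dmax
    {ι κ : Type} [Fintype ι] [DecidableEq ι] [Fintype κ] [DecidableEq κ]
    (N M : Matrix ι ι ℂ → Matrix κ κ ℂ) (hN : IsChannel N) (hM : IsChannel M)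
    (m : ℕ) (ε : ℝ) (hε0 : 0 ≤ ε) (hε1 : ε < 1)
    (P : Protocol ι κ m) (hα : P.typeI N ≤ ε) :
    (((m + 1 : ℝ))⁻¹ : EReal) * negLog2 (P.typeII M) ≤
      channelDiv DmaxFam N M +
        (((((m + 1 : ℝ))⁻¹ * Real.logb 2 ((1 - ε)⁻¹)) : ℝ) : EReal) :=
  stein_strong_converse_Dmax_general N M hN hM m ε hε1 P hα

end
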